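/- Let Γ be the subgroup of SU(2) generated by a = !![ζ, 0; 0, conj ζ] (where ζ = exp(πi/3)) and b = !![0, i; i, 0]. Then the commutator subgroup of Γ is the cyclic subgroup generated by a^2; in particular it has exactly 3 elements, namely 1, a^2 and a^4. -/

import Mathlib

open Matrix

/-- The special unitary group is a group (inverse given by conjugate transpose). -/
noncomputable instance specialUnitaryGroup.instGroup (n : Type*) [DecidableEq n] [Fintype n] :
    Group (Matrix.specialUnitaryGroup n ℂ) where
  inv A := ⟨star A.1, by
    obtain ⟨hu, hd⟩ := (Matrix.mem_specialUnitaryGroup_iff).mp A.2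
    refine (Matrix.mem_specialUnitaryGroup_iff).mpr ⟨Unitary.star_mem hu, ?_⟩
    rw [Matrix.star_eq_conjTranspose, Matrix.det_conjTranspose, hd]
    simp⟩
  inv_mul_cancel A := by
    ext1
    exact ((Matrix.mem_specialUnitaryGroup_iff).mp A.2).1.1

/-- ζ = exp(πi/3) -/
noncomputable def zeta : ℂ := Complex.exp ((Real.pi : ℂ) * Complex.I / 3)

/-- The matrix a = !![ζ, 0; 0, conj ζ]. -/
noncomputable def aMat : Matrix (Fin 2) (Fin 2) ℂ := !![zeta, 0; 0, (starRingEnd ℂ) zeta]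

/-- The matrix b = !![0, i; i, 0]. -/
def bMat : Matrix (Fin 2) (Fin 2) ℂ := !![0, Complex.I; Complex.I, 0]

/-! ### Auxiliary facts about ζ -/

lemma zeta_pow_three : zeta ^ 3 = -1 := by
  rw [zeta, ← Complex.exp_nat_mul]
  rw [show ((3:ℕ):ℂ) * ((Real.pi:ℂ) * Complex.I / 3) = Real.pi * Complex.I by push_cast; ring]
  exact Complex.exp_pi_mul_I

lemma zeta_pow_six : zeta ^ 6 = 1 := by
  have h2 : (zeta ^ 3) ^ 2 = 1 := by rw [zeta_pow_three]; ring
  rw [← pow_mul] at h2; simpa using h2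

lemma conj_zeta_pow_three : ((starRingEnd ℂ) zeta) ^ 3 = -1 := by
  rw [← map_pow, zeta_pow_three]; simp

lemma conj_zeta_pow_six : ((starRingEnd ℂ) zeta) ^ 6 = 1 := by
  rw [← map_pow, zeta_pow_six]; simp

lemma conj_zeta : (starRingEnd ℂ) zeta = zeta ^ 5 := by
  rw [zeta, ← Complex.exp_conj, ← Complex.exp_nat_mul]
  rw [Complex.exp_eq_exp_iff_exists_int]
  use -1
  have h : (starRingEnd ℂ) ((Real.pi:ℂ) * Complex.I / 3) = -((Real.pi:ℂ) * Complex.I / 3) := by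
    simp [map_div₀, Complex.conj_I, map_ofNat]
    ring
  rw [h]
  push_cast
  ring

lemma zeta_mul_conj : zeta * (starRingEnd ℂ) zeta = 1 := by
  rw [conj_zeta, ← _root_.pow_succ']; exact zeta_pow_six

lemma conj_mul_zeta : (starRingEnd ℂ) zeta * zeta = 1 := by
  rw [mul_comm]; exact zeta_mul_conj

lemma zeta_im : zeta.im = Real.sqrt 3 / 2 := by
  have h : zeta = Complex.exp (((Real.pi/3:ℝ):ℂ) * Complex.I) := by
    rw [zeta]; congr 1; push_cast; ring
  rw [h, Complex.exp_ofReal_mul_I_im, Real.sin_pi_div_three]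

lemma zeta_sq_ne_one : zeta ^ 2 ≠ 1 := by
  intro h
  have h1 : zeta = -1 := by
    have h3 := zeta_pow_three
    rw [_root_.pow_succ, h, _root_.one_mul] at h3
    exact h3
  have h2 := zeta_im
  rw [h1] at h2
  simp at h2
  have := Real.sqrt_pos.mpr (by norm_num : (0:ℝ) < 3)
  linarith

/-! ### Membership in SU(2) -/

lemma haMem : aMat ∈ Matrix.specialUnitaryGroup (Fin 2) ℂ := by
  rw [Matrix.mem_specialUnitaryGroup_iff, Matrix.mem_unitaryGroup_iff]
  constructor
  · ext i j
    fin_cases i <;> fin_cases j <;>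
      simp [aMat, star_eq_conjTranspose, Matrix.mul_apply, Fin.sum_univ_two, Matrix.one_apply,
        zeta_mul_conj, conj_mul_zeta]
  · rw [aMat, Matrix.det_fin_two_of]
    simp [zeta_mul_conj]

lemma hbMem : bMat ∈ Matrix.specialUnitaryGroup (Fin 2) ℂ := by
  rw [Matrix.mem_specialUnitaryGroup_iff, Matrix.mem_unitaryGroup_iff]
  constructor
  · ext i j
    fin_cases i <;> fin_cases j <;>
      simp [bMat, star_eq_conjTranspose, Matrix.mul_apply, Fin.sum_univ_two, Matrix.one_apply,
        Complex.conj_I]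
  · rw [bMat, Matrix.det_fin_two_of]
    simp [Complex.I_mul_I]

/-! ### Group elements and relations -/

noncomputable def AU : Matrix.specialUnitaryGroup (Fin 2) ℂ := ⟨aMat, haMem⟩
noncomputable def BU : Matrix.specialUnitaryGroup (Fin 2) ℂ := ⟨bMat, hbMem⟩

lemma hR1 : BU * AU = AU⁻¹ * BU := by
  apply Subtype.ext
  show bMat * aMat = star aMat * bMat
  ext i j
  fin_cases i <;> fin_cases j <;>
    simp [aMat, bMat, Matrix.mul_apply, Fin.sum_univ_two, star_eq_conjTranspose] <;> ring

lemma hR2 : BU * BU = AU ^ (3:ℤ) := by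
  rw [show (3:ℤ) = ((3:ℕ):ℤ) from rfl, _root_.zpow_natCast, _root_.pow_succ, _root_.pow_succ, _root_.pow_one]
  apply Subtype.ext
  show bMat * bMat = aMat * aMat * aMat
  ext i j
  fin_cases i <;> fin_cases j <;>
    simp [aMat, bMat, Matrix.mul_apply, Fin.sum_univ_two] <;>
    first
      | linear_combination zeta_pow_three
      | linear_combination -zeta_pow_three
      | linear_combination conj_zeta_pow_three
      | linear_combination -conj_zeta_pow_three
      | linear_combination Complex.I_sq - zeta_pow_three
      | linear_combination Complex.I_sq - conj_zeta_pow_three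
      | linear_combination -Complex.I_sq + zeta_pow_three
      | linear_combination -Complex.I_sq + conj_zeta_pow_three

lemma hA6 : AU ^ (6:ℤ) = 1 := by
  rw [show (6:ℤ) = ((6:ℕ):ℤ) from rfl, _root_.zpow_natCast]
  apply Subtype.ext
  show (aMat ^ 6 : Matrix (Fin 2) (Fin 2) ℂ) = 1
  ext i j
  fin_cases i <;> fin_cases j <;>
    simp [aMat, _root_.pow_succ, Matrix.mul_apply, Fin.sum_univ_two, Matrix.one_apply] <;>
    first
      | linear_combination zeta_pow_six
      | linear_combination -zeta_pow_six
      | linear_combination conj_zeta_pow_six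
      | linear_combination -conj_zeta_pow_six

lemma hA2ne : AU ^ (2:ℕ) ≠ 1 := by
  intro h
  have h2 : (aMat ^ 2 : Matrix (Fin 2) (Fin 2) ℂ) = 1 := congrArg Subtype.val h
  have h3 := congrFun (congrFun h2 0) 0
  rw [_root_.pow_two] at h3
  simp [aMat, Matrix.mul_apply, Fin.sum_univ_two, Matrix.one_apply] at h3
  exact zeta_sq_ne_one (by rw [_root_.pow_two]; exact h3)

/-! ### Word normal forms in Γ -/

lemma keyBA (k : ℤ) : BU * AU ^ k = AU ^ (-k) * BU := by
  have h : (MulAut.conj BU) AU = AU⁻¹ := by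
    rw [MulAut.conj_apply, hR1, _root_.mul_assoc, _root_.mul_inv_cancel, _root_.mul_one]
  have h2 : (MulAut.conj BU) (AU ^ k) = AU ^ (-k) := by
    rw [map_zpow, h, _root_.inv_zpow, _root_.zpow_neg]
  rw [MulAut.conj_apply] at h2
  rw [← h2]
  group

lemma L2 (i j : ℤ) : (AU ^ i * BU) * AU ^ j = AU ^ (i - j) * BU := by
  have e : i + -j = i - j := by ring
  rw [_root_.mul_assoc, keyBA, ← _root_.mul_assoc, ← _root_.zpow_add, e]

lemma L1 (i j : ℤ) : (AU ^ i * BU) * (AU ^ j * BU) = AU ^ (i - j + 3) := by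
  rw [← _root_.mul_assoc, L2, _root_.mul_assoc, hR2, ← _root_.zpow_add]

lemma L3 (i j : ℤ) : AU ^ i * (AU ^ j * BU) = AU ^ (i + j) * BU := by
  rw [← _root_.mul_assoc, ← _root_.zpow_add]

lemma Binv : BU⁻¹ = AU ^ (-3:ℤ) * BU := by
  have h : BU⁻¹ = (BU * BU)⁻¹ * BU := by group
  rw [h, hR2, ← _root_.zpow_neg]

lemma L4 (i : ℤ) : (AU ^ i * BU)⁻¹ = AU ^ (i - 3) * BU := by
  have e : (-3 : ℤ) - -i = i - 3 := by ring
  rw [_root_.mul_inv_rev, Binv, ← _root_.zpow_neg, L2, e]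

lemma form {g : Matrix.specialUnitaryGroup (Fin 2) ℂ}
    (hg : g ∈ Subgroup.closure {AU, BU}) :
    ∃ k : ℤ, g = AU ^ k ∨ g = AU ^ k * BU := by
  induction hg using Subgroup.closure_induction with
  | mem x hx =>
    rcases hx with rfl | rfl
    · exact ⟨1, Or.inl (_root_.zpow_one AU).symm⟩
    · exact ⟨0, Or.inr (by rw [_root_.zpow_zero, _root_.one_mul])⟩
  | one => exact ⟨0, Or.inl (_root_.zpow_zero AU).symm⟩
  | mul x y hx hy ihx ihy =>
    obtain ⟨i, hi | hi⟩ := ihx <;> obtain ⟨j, hj | hj⟩ := ihy <;> subst hi <;> subst hj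
    · exact ⟨i + j, Or.inl (_root_.zpow_add AU i j).symm⟩
    · exact ⟨i + j, Or.inr (L3 i j)⟩
    · exact ⟨i - j, Or.inr (L2 i j)⟩
    · exact ⟨i - j + 3, Or.inl (L1 i j)⟩
  | inv x hx ih =>
    obtain ⟨i, hi | hi⟩ := ih <;> subst hi
    · exact ⟨-i, Or.inl (_root_.zpow_neg AU i).symm⟩
    · exact ⟨i - 3, Or.inr (L4 i)⟩

open scoped commutatorElement

lemma comm_form {p q : Matrix.specialUnitaryGroup (Fin 2) ℂ}
    (hp : p ∈ Subgroup.closure {AU, BU}) (hq : q ∈ Subgroup.closure {AU, BU}) :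
    ∃ m : ℤ, ⁅p, q⁆ = AU ^ (2 * m) := by
  obtain ⟨i, hi | hi⟩ := form hp <;> obtain ⟨j, hj | hj⟩ := form hq <;>
    subst hi <;> subst hj <;> rw [commutatorElement_def]
  · exact ⟨0, by group⟩
  · refine ⟨i + 3, ?_⟩
    rw [L3, ← _root_.zpow_neg, L2, L4, L1]
    congr 1
    ring
  · refine ⟨3 - j, ?_⟩
    rw [L2, L4, L1, ← _root_.zpow_neg, ← _root_.zpow_add]
    congr 1
    ring
  · refine ⟨i - j + 3, ?_⟩
    rw [L1, L4, L4, L3, L1]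
    congr 1
    ring

lemma hA6nat : AU ^ (6:ℕ) = 1 := by
  have h := hA6
  rwa [show (6:ℤ) = ((6:ℕ):ℤ) from rfl, zpow_natCast] at h

lemma hAB : ⁅AU, BU⁆ = AU ^ (2:ℕ) := by
  have hk := keyBA (-1)
  simp only [neg_neg, _root_.zpow_one, _root_.zpow_neg_one] at hk
  have h : BU * AU⁻¹ * BU⁻¹ = AU := by rw [hk, _root_.mul_assoc, _root_.mul_inv_cancel, _root_.mul_one]
  rw [commutatorElement_def,
    show AU * BU * AU⁻¹ * BU⁻¹ = AU * (BU * AU⁻¹ * BU⁻¹) from by group, h, ← _root_.pow_two]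

/-- The commutator subgroup of Γ = ⟨a, b⟩ is the cyclic subgroup generated by a²,
and consists of exactly the three elements 1, a², a⁴. -/
theorem stmt3 :
    ∃ (ha : aMat ∈ Matrix.specialUnitaryGroup (Fin 2) ℂ)
      (hb : bMat ∈ Matrix.specialUnitaryGroup (Fin 2) ℂ),
      let Γ : Subgroup (Matrix.specialUnitaryGroup (Fin 2) ℂ) :=
        Subgroup.closure {⟨aMat, ha⟩, ⟨bMat, hb⟩}
      let aΓ : Γ := ⟨⟨aMat, ha⟩, Subgroup.subset_closure (Set.mem_insert _ _)⟩
      commutator Γ = Subgroup.zpowers (aΓ ^ 2) ∧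
      Nat.card (commutator Γ) = 3 ∧
      ((commutator Γ : Set Γ) = {1, aΓ ^ 2, aΓ ^ 4}) := by
  refine ⟨haMem, hbMem, ?_⟩
  intro Γ aΓ
  have hΓ : Γ = Subgroup.closure {AU, BU} := rfl
  have haΓ : (aΓ : Matrix.specialUnitaryGroup (Fin 2) ℂ) = AU := rfl
  have hBmem : BU ∈ Γ := Subgroup.subset_closure (Set.mem_insert_iff.mpr (Or.inr rfl))
  set bΓ : Γ := ⟨BU, hBmem⟩ with hbΓ
  -- the main equality
  have main : commutator Γ = Subgroup.zpowers (aΓ ^ 2) := by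
    apply le_antisymm
    · rw [commutator_def, Subgroup.commutator_le]
      intro p _ q _
      obtain ⟨m, hm⟩ := comm_form p.2 q.2
      refine Subgroup.mem_zpowers_iff.mpr ⟨m, ?_⟩
      apply Subtype.ext
      have hcoe : (((aΓ ^ 2) ^ m : Γ) : Matrix.specialUnitaryGroup (Fin 2) ℂ)
          = (AU ^ (2:ℕ)) ^ m := by
        rw [SubgroupClass.coe_zpow, SubmonoidClass.coe_pow, haΓ]
      rw [hcoe]
      have hcomm : ((⁅p, q⁆ : Γ) : Matrix.specialUnitaryGroup (Fin 2) ℂ)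
          = ⁅(p : Matrix.specialUnitaryGroup (Fin 2) ℂ), (q : Matrix.specialUnitaryGroup (Fin 2) ℂ)⁆ := by
        simp [commutatorElement_def]
      rw [hcomm, hm, ← zpow_natCast AU 2, ← _root_.zpow_mul]
      norm_num
    · rw [Subgroup.zpowers_le]
      have habΓ : aΓ ^ 2 = ⁅aΓ, bΓ⁆ := by
        apply Subtype.ext
        have h1 : ((aΓ ^ 2 : Γ) : Matrix.specialUnitaryGroup (Fin 2) ℂ) = AU ^ (2:ℕ) := by
          rw [SubmonoidClass.coe_pow, haΓ]
        have h2 : ((⁅aΓ, bΓ⁆ : Γ) : Matrix.specialUnitaryGroup (Fin 2) ℂ) = ⁅AU, BU⁆ := by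
          simp only [commutatorElement_def]; rfl
        rw [h1, h2, hAB]
      rw [habΓ, commutator_def]
      exact Subgroup.commutator_mem_commutator (Subgroup.mem_top _) (Subgroup.mem_top _)
  refine ⟨main, ?_, ?_⟩
  -- order of aΓ^2 is 3
  all_goals {
    have hpow3 : (aΓ ^ 2) ^ 3 = 1 := by
      rw [← _root_.pow_mul]
      apply Subtype.ext
      show ((aΓ : Matrix.specialUnitaryGroup (Fin 2) ℂ)) ^ 6 = 1
      rw [haΓ]
      exact hA6nat
    have hne1 : aΓ ^ 2 ≠ 1 := by
      intro h
      apply hA2ne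
      have := congrArg (Subtype.val) h
      rw [SubmonoidClass.coe_pow, haΓ] at this
      exact this
    have horder : orderOf (aΓ ^ 2) = 3 := by
      haveI : Fact (Nat.Prime 3) := ⟨by norm_num⟩
      exact orderOf_eq_prime hpow3 hne1
    first
    | (rw [main, Nat.card_zpowers, horder])
    | (rw [main]
       ext x
       simp only [SetLike.mem_coe, Subgroup.mem_zpowers_iff, Set.mem_insert_iff,
         Set.mem_singleton_iff]
       have h3 : (aΓ ^ 2) ^ (3:ℤ) = 1 := by
         rw [show (3:ℤ) = ((3:ℕ):ℤ) from rfl, zpow_natCast, hpow3]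
       constructor
       · rintro ⟨k, rfl⟩
         have hsplit : (aΓ ^ 2) ^ k = (aΓ ^ 2) ^ (k % 3) := by
           conv_lhs => rw [show k = 3 * (k / 3) + k % 3 from by omega]
           rw [_root_.zpow_add, _root_.zpow_mul, h3, _root_.one_zpow, _root_.one_mul]
         have hr : k % 3 = 0 ∨ k % 3 = 1 ∨ k % 3 = 2 := by omega
         rcases hr with hr | hr | hr <;> rw [hsplit, hr]
         · left; exact zpow_zero _
         · right; left; exact zpow_one _
         · right; right
           rw [show (2:ℤ) = ((2:ℕ):ℤ) from rfl, zpow_natCast, ← _root_.pow_mul]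
       · rintro (rfl | rfl | rfl)
         · exact ⟨0, zpow_zero _⟩
         · exact ⟨1, zpow_one _⟩
         · exact ⟨2, by rw [show (2:ℤ) = ((2:ℕ):ℤ) from rfl, zpow_natCast, ← _root_.pow_mul]⟩)
  }
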